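/- Let G be the bipartite graph with V(G) = {x_1,...,x_n, y_1,...,y_n} and E(G) = {{x_1,y_j} : 1 ≤ j ≤ n} ∪ {{x_i,y_i} : 2 ≤ i ≤ n}, and let J_G ⊂ R = K[x_1,...,x_n,y_1,...,y_n] be its cover ideal. Then J_G is generated in degree n and has linear quotients. -/

import Mathlib

open MvPolynomial

/-- A vertex cover of a simple graph: a set of vertices meeting every edge. -/
def IsVertexCover {V : Type} (G : SimpleGraph V) (w : Finset V) : Prop :=
  ∀ ⦃a b : V⦄, G.Adj a b → a ∈ w ∨ b ∈ w

/-- The cover ideal of a finite simple graph `G`: the ideal of the polynomial ring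
`K[x_v : v ∈ V]` generated by the monomials `∏_{x ∈ w} x` over all vertex covers `w`. -/
noncomputable def coverIdeal (K : Type) [Field K] {V : Type} [Fintype V]
    (G : SimpleGraph V) : Ideal (MvPolynomial V K) :=
  Ideal.span { p | ∃ w : Finset V, IsVertexCover G w ∧ p = ∏ x ∈ w, X x }

/-- The linear map `(c_j) ↦ ∑_j c_j • v_j`. -/
noncomputable def lcomb {R M : Type} [CommRing R] [AddCommGroup M] [Module R M]
    {ι : Type} [Fintype ι] (v : ι → M) : (ι → R) →ₗ[R] M :=
  Fintype.linearCombination R v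

/-- A minimal graded free resolution
`0 → F_len → ⋯ → F_2 → F_1 → R → R/I → 0`
of the quotient of `R = K[x_1,…,x_N]` by a homogeneous ideal `I`, where
`F_i = ⊕_{j < rank i} R(-(deg i j))` is a graded free module.
The map `F_1 → R` sends the `j`-th basis vector to `gen j`, and for `i ≥ 1` the map
`F_{i+1} → F_i` is given by the matrix `mat (i-1)` (acting by `Matrix.mulVec`);
all maps are graded (entries are homogeneous of the appropriate degrees), the
complex is exact at every `F_i`, the image of `F_1 → R` is `I`, and minimality
means that all matrix entries (and the generators) lie in the graded maximal ideal,
i.e. have vanishing constant coefficient. -/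
structure MinimalGradedFreeResolution {K : Type} [Field K] {σ : Type}
    (I : Ideal (MvPolynomial σ K)) where
  len : ℕ
  rank : ℕ → ℕ
  deg : ∀ i : ℕ, Fin (rank i) → ℕ
  gen : Fin (rank 1) → MvPolynomial σ K
  mat : ∀ i : ℕ, Matrix (Fin (rank (i + 1))) (Fin (rank (i + 2))) (MvPolynomial σ K)
  rank_pos : ∀ i, 1 ≤ i → i ≤ len → 0 < rank i
  rank_zero : ∀ i, len < i → rank i = 0
  span_gen : Ideal.span (Set.range gen) = I
  gen_hom : ∀ j, (gen j).IsHomogeneous (deg 1 j)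
  mat_hom : ∀ i p q, mat i p q = 0 ∨
    (deg (i + 1) p ≤ deg (i + 2) q ∧
      (mat i p q).IsHomogeneous (deg (i + 2) q - deg (i + 1) p))
  exact_one : Function.Exact ⇑((mat 0).mulVecLin) ⇑(lcomb gen)
  exact_succ : ∀ i, Function.Exact ⇑((mat (i + 1)).mulVecLin) ⇑((mat i).mulVecLin)
  minimal_gen : ∀ j, constantCoeff (gen j) = 0
  minimal_mat : ∀ i p q, constantCoeff (mat i p q) = 0

namespace MinimalGradedFreeResolution

variable {K : Type} [Field K] {σ : Type} {I : Ideal (MvPolynomial σ K)}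

/-- The Castelnuovo–Mumford regularity of the ideal `I`, read off from a minimal graded
free resolution of `R/I`: `reg I = max_{i ≥ 0} (t_i(I) - i)` where
`t_i(I) = t_{i+1}(R/I)` is the largest twist in homological degree `i + 1`. -/
def regIdeal (res : MinimalGradedFreeResolution I) : ℕ :=
  Finset.sup (Finset.range res.len)
    (fun i => (Finset.univ.sup fun j => res.deg (i + 1) j) - i)

/-- The Castelnuovo–Mumford regularity of the module `R/I`, read off from a minimal graded
free resolution: `reg (R/I) = max_{i ≥ 0} (t_i(R/I) - i)` (the `i = 0` term is `0`). -/
def regQuot (res : MinimalGradedFreeResolution I) : ℕ :=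
  Finset.sup (Finset.range res.len)
    (fun i => (Finset.univ.sup fun j => res.deg (i + 1) j) - (i + 1))

end MinimalGradedFreeResolution

/-- The minimal number of generators of an ideal. -/
noncomputable def muIdeal {R : Type} [CommRing R] (I : Ideal R) : ℕ :=
  sInf {k | ∃ s : Finset R, s.card = k ∧ Ideal.span (s : Set R) = I}

/-- The Hilbert function of `R/I` for a homogeneous ideal `I` of `R = K[x_1,…,x_N]`:
`d ↦ dim_K (R/I)_d = dim_K R_d - dim_K I_d`. -/
noncomputable def hilbQuot {K : Type} [Field K] {σ : Type}
    (I : Ideal (MvPolynomial σ K)) (d : ℕ) : ℕ :=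
  Module.finrank K (homogeneousSubmodule σ K d) -
    Module.finrank K
      ((Submodule.restrictScalars K (I : Submodule (MvPolynomial σ K) (MvPolynomial σ K)) ⊓
        homogeneousSubmodule σ K d : Submodule K (MvPolynomial σ K)))

/-- `f 0, …, f (k-1)` is a regular sequence on `R`: each `f i` is a nonzerodivisor
modulo the previous ones, and the `f i` generate a proper ideal. -/
def IsRegSeq {R : Type} [CommRing R] {k : ℕ} (f : Fin k → R) : Prop :=
  (∀ i : Fin k, ∀ r : R, f i * r ∈ Ideal.span (f '' {j | j < i}) →
      r ∈ Ideal.span (f '' {j | j < i})) ∧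
  Ideal.span (Set.range f) ≠ ⊤

/-- The bipartite graph on `{x_1,…,x_n} ⊔ {y_1,…,y_n}` (vertices `0`-indexed) with edges
`{x_1, y_j}` for `1 ≤ j ≤ n` and `{x_i, y_i}` for `2 ≤ i ≤ n`. -/
def bipartiteFan (n : ℕ) : SimpleGraph (Fin n ⊕ Fin n) :=
  SimpleGraph.fromRel (fun a b => ∃ i j : Fin n,
    a = Sum.inl i ∧ b = Sum.inr j ∧ ((i : ℕ) = 0 ∨ i = j))

/-- The bipartite graph `K_{U₁, V} ∪ K_{U₂, V₂}` on `U ⊔ V`, where `U = U₁ ⊔ U₂` with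
`|U₁| = n₁`, `|U₂| = n₂` (`U₁` consists of the first `n₁` indices) and `V = V₁ ⊔ V₂` with
`|V₁| = m₁`, `|V₂| = m₂` (`V₂` consists of the last `m₂` indices). -/
def twoBlockBipartite (n₁ n₂ m₁ m₂ : ℕ) :
    SimpleGraph (Fin (n₁ + n₂) ⊕ Fin (m₁ + m₂)) :=
  SimpleGraph.fromRel (fun a b => ∃ (i : Fin (n₁ + n₂)) (j : Fin (m₁ + m₂)),
    a = Sum.inl i ∧ b = Sum.inr j ∧ ((i : ℕ) < n₁ ∨ (n₁ ≤ (i : ℕ) ∧ m₁ ≤ (j : ℕ))))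

/-- The index of the part containing a vertex of the complete tripartite graph. -/
def part3 {m₁ m₂ m₃ : ℕ} : Fin m₁ ⊕ Fin m₂ ⊕ Fin m₃ → ℕ :=
  Sum.elim (fun _ => 0) (Sum.elim (fun _ => 1) (fun _ => 2))

/-- The complete tripartite graph with parts of sizes `m₁, m₂, m₃`:
two vertices are adjacent iff they lie in different parts. -/
def completeTripartite (m₁ m₂ m₃ : ℕ) : SimpleGraph (Fin m₁ ⊕ Fin m₂ ⊕ Fin m₃) :=
  SimpleGraph.fromRel (fun a b => part3 a ≠ part3 b)

/-- The index of the part containing a vertex of the complete 4-partite graph. -/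
def part4 {m₁ m₂ m₃ m₄ : ℕ} : Fin m₁ ⊕ Fin m₂ ⊕ Fin m₃ ⊕ Fin m₄ → ℕ :=
  Sum.elim (fun _ => 0) (Sum.elim (fun _ => 1) (Sum.elim (fun _ => 2) (fun _ => 3)))

/-- The complete 4-partite graph with parts of sizes `m₁, m₂, m₃, m₄`:
two vertices are adjacent iff they lie in different parts. -/
def complete4Partite (m₁ m₂ m₃ m₄ : ℕ) :
    SimpleGraph (Fin m₁ ⊕ Fin m₂ ⊕ Fin m₃ ⊕ Fin m₄) :=
  SimpleGraph.fromRel (fun a b => part4 a ≠ part4 b)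

/-!
Every vertex cover of the fan contains one of the covers `x_U ∪ y_{Uᶜ}` with `U = ∅` or `0 ∈ U`,
and these are squarefree monomials of degree `n`. For squarefree monomials the colon ideal
`(u_i : i < j) : u_j` is generated by the quotients `u_i / gcd(u_i, u_j)`, so it is generated by
variables once each such quotient is divisible by a quotient that is a single variable. List the
covers so that every `U` comes after all of its subsets. For `U'` listed before `U` some
`b ∈ U \ U'` exists; then `y_b` divides the quotient of `U'`, and `y_b` is itself the quotient of
`U \ {b}`, except when `U = {0}` and `U' = ∅`, where `y_0` is the quotient of `U'`.
-/

open Finset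

section MonomialIdeal

variable {σ ι R : Type*} [CommSemiring R]

theorem prod_X_eq_monomial_indicator (A : Finset σ) :
    ∏ x ∈ A, (X x : MvPolynomial σ R) = monomial (Finsupp.indicator A fun _ _ => 1) 1 := by
  simpa only [pow_one] using prod_X_pow (R := R) (fun _ => 1) A

theorem isHomogeneous_prod_X (A : Finset σ) :
    (∏ x ∈ A, (X x : MvPolynomial σ R)).IsHomogeneous #A := by
  simpa using IsHomogeneous.prod A X (fun _ => 1) fun i _ => isHomogeneous_X R i

theorem prod_X_dvd_X_mul_prod_X [DecidableEq σ] {A B : Finset σ} {v : σ} (h : A \ B = {v}) :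
    ∏ x ∈ A, (X x : MvPolynomial σ R) ∣ X v * ∏ x ∈ B, X x := by
  have hv : v ∉ B := (mem_sdiff.mp (h ▸ mem_singleton_self v)).2
  rw [← prod_insert (f := fun x => (X x : MvPolynomial σ R)) hv]
  refine prod_dvd_prod_of_subset _ _ _ fun x hx => ?_
  by_cases hxB : x ∈ B
  · exact mem_insert_of_mem hxB
  · have hxAB : x ∈ A \ B := mem_sdiff.mpr ⟨hx, hxB⟩
    rw [h, mem_singleton] at hxAB
    exact hxAB ▸ mem_insert_self v B

theorem colon_span_prod_X_eq_span_X [LT ι] [DecidableEq σ] (A : ι → Finset σ) (j : ι)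
    (h : ∀ i < j, ∃ k < j, ∃ v ∈ A i, A k \ A j = {v}) :
    Submodule.colon (Ideal.span ((fun i => ∏ x ∈ A i, (X x : MvPolynomial σ R)) '' {i | i < j}))
        (Ideal.span {∏ x ∈ A j, (X x : MvPolynomial σ R)}) =
      Ideal.span (X '' {v | ∃ k < j, A k \ A j = {v}}) := by
  apply le_antisymm
  · intro r hr
    have hrj := Submodule.mem_colon_span_singleton.mp hr
    simp_rw [smul_eq_mul, prod_X_eq_monomial_indicator] at hrj
    rw [← Set.image_image (fun s => monomial s (1 : R))
      (fun i => Finsupp.indicator (A i) fun _ _ => 1)] at hrj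
    rw [mem_ideal_span_X_image]
    intro d hd
    have hdj : d + Finsupp.indicator (A j) (fun _ _ => 1) ∈
        (r * monomial (Finsupp.indicator (A j) fun _ _ => 1) 1).support := by
      rw [mem_support_iff, coeff_mul_monomial, mul_one]
      exact mem_support_iff.mp hd
    obtain ⟨_, ⟨i, hi, rfl⟩, hle⟩ := mem_ideal_span_monomial_image.mp hrj _ hdj
    obtain ⟨k, hk, v, hvi, hkv⟩ := h i hi
    have hvj : v ∉ A j := (mem_sdiff.mp (hkv ▸ mem_singleton_self v)).2
    refine ⟨v, ⟨k, hk, hkv⟩, ?_⟩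
    have := hle v
    simp only [Finsupp.coe_add, Pi.add_apply, Finsupp.indicator_apply, hvi, hvj,
      dite_true, dite_false] at this
    omega
  · rw [Ideal.span_le]
    rintro _ ⟨v, ⟨k, hk, hkv⟩, rfl⟩
    refine Submodule.mem_colon_span_singleton.mpr ?_
    obtain ⟨c, hc⟩ := prod_X_dvd_X_mul_prod_X (R := R) hkv
    rw [smul_eq_mul, hc, mul_comm]
    exact Ideal.mul_mem_left _ _ (Ideal.subset_span ⟨k, hk, rfl⟩)

end MonomialIdeal

theorem span_prod_X_eq_coverIdeal (K : Type) [Field K] {V ι : Type} [Fintype V]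
    {G : SimpleGraph V} (A : ι → Finset V) (hA : ∀ i, IsVertexCover G (A i))
    (hmin : ∀ w, IsVertexCover G w → ∃ i, A i ⊆ w) :
    Ideal.span (Set.range fun i => ∏ x ∈ A i, (X x : MvPolynomial V K)) = coverIdeal K G := by
  classical
  apply le_antisymm
  · rw [Ideal.span_le]
    rintro _ ⟨i, rfl⟩
    exact Ideal.subset_span ⟨A i, hA i, rfl⟩
  · rw [coverIdeal, Ideal.span_le]
    rintro _ ⟨w, hw, rfl⟩
    obtain ⟨i, hi⟩ := hmin w hw
    rw [SetLike.mem_coe, ← prod_sdiff hi]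
    exact Ideal.mul_mem_left _ _ (Ideal.subset_span ⟨i, rfl⟩)

theorem disjSum_compl_erase_sdiff {α : Type*} [Fintype α] [DecidableEq α] {U : Finset α} {b : α}
    (hb : b ∈ U) : (U.erase b).disjSum (U.erase b)ᶜ \ U.disjSum Uᶜ = {Sum.inr b} := by
  ext (i | i)
  · simp
  · by_cases hi : i = b <;> simp [hi, hb]

instance (α : Type*) [Fintype α] : Fintype (Colex α) := inferInstanceAs (Fintype α)

section BipartiteFan

variable {n : ℕ} [NeZero n]

theorem isVertexCover_bipartiteFan_iff {w : Finset (Fin n ⊕ Fin n)} :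
    IsVertexCover (bipartiteFan n) w ↔
      ∀ i j : Fin n, (i = 0 ∨ i = j) → Sum.inl i ∈ w ∨ Sum.inr j ∈ w := by
  simp only [← Fin.val_eq_zero_iff]
  refine ⟨fun hw i j hij => hw ?_, fun hw a b hab => ?_⟩
  · simpa [bipartiteFan] using hij
  · obtain ⟨-, ⟨i, j, rfl, rfl, hij⟩ | ⟨i, j, rfl, rfl, hij⟩⟩ := hab
    · exact hw i j hij
    · exact (hw i j hij).symm

theorem isVertexCover_disjSum_compl {U : Finset (Fin n)} (hU : U = ∅ ∨ 0 ∈ U) :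
    IsVertexCover (bipartiteFan n) (U.disjSum Uᶜ) := by
  rw [isVertexCover_bipartiteFan_iff]
  rintro i j (rfl | rfl) <;> simp only [inl_mem_disjSum, inr_mem_disjSum, mem_compl]
  · rcases hU with rfl | h0
    · exact Or.inr (notMem_empty j)
    · exact Or.inl h0
  · exact em _

theorem exists_disjSum_compl_subset {w : Finset (Fin n ⊕ Fin n)}
    (hw : IsVertexCover (bipartiteFan n) w) :
    ∃ U : Finset (Fin n), (U = ∅ ∨ 0 ∈ U) ∧ U.disjSum Uᶜ ⊆ w := by
  classical
  rw [isVertexCover_bipartiteFan_iff] at hw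
  by_cases h0 : Sum.inl 0 ∈ w
  · refine ⟨univ.filter fun i => Sum.inl i ∈ w, Or.inr (by simpa using h0), ?_⟩
    rintro (i | i) hi <;> simp only [inl_mem_disjSum, inr_mem_disjSum, mem_compl, mem_filter,
      mem_univ, true_and] at hi
    · exact hi
    · exact (hw i i (Or.inr rfl)).resolve_left hi
  · refine ⟨∅, Or.inl rfl, ?_⟩
    rintro (i | j) h
    · simp at h
    · exact (hw 0 j (Or.inl rfl)).resolve_left h0

theorem exists_mem_erase_of_not_subset {U U' : Finset (Fin n)} (hU : U = ∅ ∨ 0 ∈ U)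
    (hU' : U' = ∅ ∨ 0 ∈ U') (h : ¬U ⊆ U') :
    ∃ b ∈ U, b ∉ U' ∧ (U.erase b = ∅ ∨ 0 ∈ U.erase b) := by
  by_cases hb : ∃ b ∈ U, b ≠ 0 ∧ b ∉ U'
  · obtain ⟨b, hbU, hb0, hbU'⟩ := hb
    have h0 : 0 ∈ U := hU.resolve_left (ne_empty_of_mem hbU)
    exact ⟨b, hbU, hbU', Or.inr (mem_erase.mpr ⟨hb0.symm, h0⟩)⟩
  · push Not at hb
    obtain ⟨a, haU, haU'⟩ := not_subset.mp h
    obtain rfl : a = 0 := by_contra fun ha => haU' (hb a haU ha)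
    obtain rfl : U' = ∅ := hU'.resolve_right haU'
    refine ⟨0, haU, haU', Or.inl (eq_empty_of_forall_notMem fun b hb' => ?_)⟩
    obtain ⟨hb0, hbU⟩ := mem_erase.mp hb'
    exact notMem_empty b (hb b hbU hb0)

/-- Indexes the covers `x_U ∪ y_{Uᶜ}`; the colexicographic order lists every `U` after all of
its subsets. -/
abbrev FanCoverIndex (n : ℕ) [NeZero n] : Type :=
  {c : Colex (Finset (Fin n)) // ofColex c = ∅ ∨ 0 ∈ ofColex c}

def fanCover (c : FanCoverIndex n) : Finset (Fin n ⊕ Fin n) :=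
  (ofColex c.1).disjSum (ofColex c.1)ᶜ

theorem card_fanCover (c : FanCoverIndex n) : #(fanCover c) = n := by
  simp [fanCover, card_add_card_compl]

theorem exists_sdiff_fanCover_eq_singleton {i j : FanCoverIndex n} (hij : i < j) :
    ∃ k < j, ∃ v ∈ fanCover i, fanCover k \ fanCover j = {v} := by
  have hsub : ¬ofColex j.1 ⊆ ofColex i.1 := fun h =>
    (Colex.toColex_le_toColex_of_subset h).not_gt hij
  obtain ⟨b, hbj, hbi, hvalid⟩ := exists_mem_erase_of_not_subset j.2 i.2 hsub
  refine ⟨⟨toColex ((ofColex j.1).erase b), hvalid⟩, ?_, Sum.inr b, ?_,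
    disjSum_compl_erase_sdiff hbj⟩
  · exact Colex.toColex_lt_toColex_of_ssubset (erase_ssubset hbj)
  · simpa [fanCover] using hbi

end BipartiteFan

/-- For the bipartite graph `G` with edges `{x_1,y_j}` (all `j`) and
`{x_i,y_i}` (`i ≥ 2`), the cover ideal is generated in degree `n` and has linear quotients. -/
theorem coverIdeal_bipartiteFan_linearQuotients (K : Type) [Field K] (n : ℕ) (hn : 1 ≤ n) :
    (∃ S : Set (MvPolynomial (Fin n ⊕ Fin n) K),
        (∀ p ∈ S, p.IsHomogeneous n) ∧ Ideal.span S = coverIdeal K (bipartiteFan n)) ∧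
    (∃ (ℓ : ℕ) (f : Fin ℓ → MvPolynomial (Fin n ⊕ Fin n) K),
        (∀ j, ∃ d, (f j).IsHomogeneous d) ∧
        Ideal.span (Set.range f) = coverIdeal K (bipartiteFan n) ∧
        ∀ j : Fin ℓ, ∃ T : Set (Fin n ⊕ Fin n),
          Submodule.colon (Ideal.span (f '' {i | i < j})) (Ideal.span {f j}) =
            Ideal.span (MvPolynomial.X '' T)) := by
  have : NeZero n := ⟨by omega⟩
  let e := Fintype.orderIsoFinOfCardEq (FanCoverIndex n) rfl
  let f j := ∏ x ∈ fanCover (e j), (X x : MvPolynomial (Fin n ⊕ Fin n) K)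
  have hhom j : (f j).IsHomogeneous n := by
    simpa only [card_fanCover] using isHomogeneous_prod_X (R := K) (fanCover (e j))
  have hspan : Ideal.span (Set.range f) = coverIdeal K (bipartiteFan n) := by
    refine span_prod_X_eq_coverIdeal K _ (fun j => isVertexCover_disjSum_compl (e j).2)
      fun w hw => ?_
    obtain ⟨U, hU, hUw⟩ := exists_disjSum_compl_subset hw
    exact ⟨e.symm ⟨toColex U, hU⟩, by simpa [fanCover] using hUw⟩
  refine ⟨⟨_, Set.forall_mem_range.mpr hhom, hspan⟩, _, f, fun j => ⟨n, hhom j⟩, hspan,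
    fun j => ⟨{v | ∃ k < e j, fanCover k \ fanCover (e j) = {v}}, ?_⟩⟩
  rw [show f '' {i | i < j} = (fun c => ∏ x ∈ fanCover c, X x) '' Set.Iio (e j) by
    rw [← e.image_Iio, Set.image_image]; rfl]
  exact colon_span_prod_X_eq_span_X fanCover (e j) fun i hi => exists_sdiff_fanCover_eq_singleton hi
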